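/- Let F be a continuously differentiable cdf with density f > 0 on [0, r], let C > 0 and β*(x) = C/(1−F(x)), and let G be a continuously differentiable cdf with density g such that G(β*(x)) > 0 on [0, r]. Assume the virtual value ψ_F(x) = x − (1−F(x))/f(x) satisfies ψ_F(x) ≤ 0 on [0, r). Let h : [0, r] → [0, ∞) with h(r) = 0 and let ρ be defined by β*(x)·ρ(x)·(1−F(x)) = ∫ₓ^r h(t)·β*'(t)·g(β*(t)) / G(β*(t))² dt − h(x)/G(β*(x)). Then I = ∫₀^r x·f(x)·g(β*(x))·ρ(x)·β*(x) dx ≤ 0. -/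

import Mathlib

/-!
Write `q x = x (1 - F x) / C` and `u = G ∘ β*`. Then `u' = g(β*) β*'`, so that
`x f g(β*) / (1 - F) = q u'` and the integrand of the definition of `ρ` is `h u' / u²`.
Hence `I = ∫₀^r q u' (∫ₓ^r h u'/u² - h/u)`. Exchanging the order of integration in the
first part gives `∫₀^r h(t) u'(t)/u(t)² Φ(t) dt` with `Φ(t) = ∫₀ᵗ q u'`. As `ψ_F ≤ 0`,
`q` is nondecreasing, so `Φ(t) ≤ q(t) (u(t) - u(0)) ≤ q(t) u(t)`, and the first part is at
most `∫₀^r h q u'/u`, which is the second part.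
-/

open MeasureTheory intervalIntegral

open Set

theorem integral_mul_integral_tail_eq {f g : ℝ → ℝ} {a b : ℝ} (hab : a ≤ b)
    (hf : IntervalIntegrable f volume a b) (hg : IntervalIntegrable g volume a b) :
    ∫ x in a..b, f x * ∫ t in x..b, g t = ∫ t in a..b, g t * ∫ x in a..t, f x := by
  set ν := volume.restrict (Ioc a b)
  set φ : ℝ × ℝ → ℝ := {p : ℝ × ℝ | p.1 < p.2}.indicator fun p => f p.1 * g p.2
  have hφ : Integrable φ (ν.prod ν) :=
    (hf.1.mul_prod hg.1).indicator (measurableSet_lt measurable_fst measurable_snd)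
  have hrow : ∀ x ∈ Ioc a b, ∫ t, φ (x, t) ∂ν = f x * ∫ t in x..b, g t := fun x hx => by
    have : ∀ t, φ (x, t) = f x * (Ioi x).indicator g t :=
      fun t => by by_cases hxt : x < t <;> simp [φ, hxt]
    rw [funext this, MeasureTheory.integral_const_mul,
      MeasureTheory.integral_indicator measurableSet_Ioi,
      Measure.restrict_restrict measurableSet_Ioi, inter_comm, Ioc_inter_Ioi,
      max_eq_right hx.1.le, integral_of_le hx.2]
  have hcol : ∀ t ∈ Ioc a b, ∫ x, φ (x, t) ∂ν = g t * ∫ x in a..t, f x := fun t ht => by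
    have : ∀ x, φ (x, t) = g t * (Iio t).indicator f x :=
      fun x => by by_cases hxt : x < t <;> simp [φ, hxt, mul_comm]
    have hIoo : Iio t ∩ Ioc a b = Ioo a t := by
      ext; simp only [mem_inter_iff, mem_Iio, mem_Ioc, mem_Ioo]; grind
    rw [funext this, MeasureTheory.integral_const_mul,
      MeasureTheory.integral_indicator measurableSet_Iio,
      Measure.restrict_restrict measurableSet_Iio, hIoo, integral_of_le ht.1.le,
      integral_Ioc_eq_integral_Ioo]
  rw [integral_of_le hab, integral_of_le hab, ← setIntegral_congr_fun measurableSet_Ioc hrow,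
    ← setIntegral_congr_fun measurableSet_Ioc hcol]
  exact integral_integral_swap hφ

theorem integral_mul_deriv_le_of_monotoneOn {q u u' : ℝ → ℝ} {a b : ℝ} (hab : a ≤ b)
    (hq : MonotoneOn q (Icc a b)) (hu : ∀ x ∈ Icc a b, HasDerivAt u (u' x) x)
    (hu'c : ContinuousOn u' (Icc a b)) (hu' : ∀ x ∈ Icc a b, 0 ≤ u' x) :
    ∫ x in a..b, q x * u' x ≤ q b * (u b - u a) := by
  have hI : uIcc a b = Icc a b := uIcc_of_le hab
  have hu'i : IntervalIntegrable u' volume a b := (hI ▸ hu'c).intervalIntegrable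
  calc ∫ x in a..b, q x * u' x ≤ ∫ x in a..b, q b * u' x :=
        integral_mono_on hab ((hI ▸ hq).intervalIntegrable.mul_continuousOn (hI ▸ hu'c))
          (hu'i.const_mul _) fun x hx =>
            mul_le_mul_of_nonneg_right (hq hx ⟨hab, le_rfl⟩ hx.2) (hu' x hx)
    _ = q b * (u b - u a) := by
      rw [intervalIntegral.integral_const_mul,
        integral_eq_sub_of_hasDerivAt (hI ▸ hu) hu'i]

theorem integral_mul_deriv_mul_tail_sub_nonpos {q u u' h : ℝ → ℝ} {a b : ℝ} (hab : a ≤ b)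
    (hq : MonotoneOn q (Icc a b)) (hqc : ContinuousOn q (Icc a b)) (hqa : 0 ≤ q a)
    (hu : ∀ x ∈ Icc a b, HasDerivAt u (u' x) x) (hu'c : ContinuousOn u' (Icc a b))
    (hu' : ∀ x ∈ Icc a b, 0 ≤ u' x) (hupos : ∀ x ∈ Icc a b, 0 < u x)
    (hh : IntegrableOn h (Icc a b)) (hhnn : ∀ x ∈ Icc a b, 0 ≤ h x) :
    ∫ x in a..b, q x * u' x * ((∫ t in x..b, h t * (u' t / u t ^ 2)) - h x / u x) ≤ 0 := by
  have hI : uIcc a b = Icc a b := uIcc_of_le hab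
  have huc : ContinuousOn u (Icc a b) := fun x hx => (hu x hx).continuousAt.continuousWithinAt
  have hqu' : ContinuousOn (fun x => q x * u' x) (Icc a b) := hqc.mul hu'c
  have hhk : IntegrableOn (fun t => h t * (u' t / u t ^ 2)) (Icc a b) :=
    hh.mul_continuousOn (hu'c.div (huc.pow 2) fun t ht => (pow_pos (hupos t ht) 2).ne')
      isCompact_Icc
  have hL : ContinuousOn (fun x => q x * u' x * ∫ t in x..b, h t * (u' t / u t ^ 2))
      (Icc a b) :=
    hqu'.mul (hI ▸ continuousOn_primitive_interval_left (hI ▸ hhk))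
  have hR : IntegrableOn (fun x => q x * u' x * (h x / u x)) (Icc a b) :=
    (hh.mul_continuousOn (hqu'.div huc fun t ht => (hupos t ht).ne') isCompact_Icc).congr_fun
      (fun x _ => by simp only [Pi.div_apply]; ring) measurableSet_Icc
  have hΦ : ∀ t ∈ Icc a b, ∫ x in a..t, q x * u' x ≤ q t * u t := fun t ht => by
    have hsub : Icc a t ⊆ Icc a b := Icc_subset_Icc_right ht.2
    calc _ ≤ q t * (u t - u a) :=
          integral_mul_deriv_le_of_monotoneOn ht.1 (hq.mono hsub) (fun x hx => hu x (hsub hx))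
            (hu'c.mono hsub) fun x hx => hu' x (hsub hx)
      _ ≤ q t * u t :=
          mul_le_mul_of_nonneg_left (by linarith [hupos a ⟨le_rfl, hab⟩])
            (hqa.trans (hq ⟨le_rfl, hab⟩ ht ht.1))
  rw [← hI] at hqu' hhk hR hL
  simp only [mul_sub]
  rw [integral_sub hL.intervalIntegrable hR.intervalIntegrable,
    integral_mul_integral_tail_eq hab hqu'.intervalIntegrable hhk.intervalIntegrable, sub_nonpos]
  refine integral_mono_on hab (hhk.intervalIntegrable.mul_continuousOn
    (continuousOn_primitive_interval hqu'.integrableOn_uIcc)) hR.intervalIntegrable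
    fun t ht => ?_
  calc h t * (u' t / u t ^ 2) * ∫ x in a..t, q x * u' x
      ≤ h t * (u' t / u t ^ 2) * (q t * u t) :=
        mul_le_mul_of_nonneg_left (hΦ t ht)
          (mul_nonneg (hhnn t ht) (div_nonneg (hu' t ht) (sq_nonneg _)))
    _ = q t * u' t * (h t / u t) := by field_simp [(hupos t ht).ne']

noncomputable def virtualValue (F f : ℝ → ℝ) (x : ℝ) : ℝ := x - (1 - F x) / f x

theorem monotoneOn_mul_one_sub_of_virtualValue_nonpos {F f : ℝ → ℝ} {a b : ℝ}
    (hF : ∀ x ∈ Icc a b, HasDerivAt F (f x) x) (hf : ∀ x ∈ Ioo a b, 0 < f x)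
    (hψ : ∀ x ∈ Ioo a b, virtualValue F f x ≤ 0) :
    MonotoneOn (fun x => x * (1 - F x)) (Icc a b) := by
  have hd : ∀ x ∈ Icc a b, HasDerivAt (fun x => x * (1 - F x)) (1 * (1 - F x) + x * -f x) x :=
    fun x hx => (hasDerivAt_id' x).mul ((hF x hx).const_sub 1)
  refine monotoneOn_of_hasDerivWithinAt_nonneg (convex_Icc a b)
    (fun x hx => (hd x hx).continuousAt.continuousWithinAt)
    (fun x hx => (hd x (interior_subset hx)).hasDerivWithinAt) fun x hx => ?_
  rw [interior_Icc] at hx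
  have := (le_div_iff₀ (hf x hx)).1 (sub_nonpos.1 (hψ x hx))
  linarith

theorem HasDerivAt.const_div_one_sub {F : ℝ → ℝ} {f x : ℝ} (C : ℝ) (hF : HasDerivAt F f x)
    (hx : F x ≠ 1) : HasDerivAt (fun y => C / (1 - F y)) (C * f / (1 - F x) ^ 2) x :=
  ((hasDerivAt_const x C).div (hF.const_sub 1) (sub_ne_zero.2 hx.symm)).congr_deriv (by ring)

theorem stmt_9_general (r : ℝ) (hr : 0 < r) (F f : ℝ → ℝ)
    (hFderiv : ∀ x ∈ Set.Icc 0 r, HasDerivAt F (f x) x)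
    (hfcont : ContinuousOn f (Set.Icc 0 r))
    (hfpos : ∀ x ∈ Set.Icc 0 r, 0 < f x)
    (hF1 : ∀ x ∈ Set.Icc 0 r, F x < 1)
    (C : ℝ) (hC : 0 < C)
    (βstar : ℝ → ℝ) (hβ : ∀ x, βstar x = C / (1 - F x))
    (G g : ℝ → ℝ) (hGderiv : ∀ y, HasDerivAt G (g y) y) (hgcont : Continuous g)
    (hGmono : Monotone G)
    (hGpos : ∀ x ∈ Set.Icc 0 r, 0 < G (βstar x))
    (hψ : ∀ x ∈ Set.Ico 0 r, x - (1 - F x) / f x ≤ 0)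
    (h : ℝ → ℝ) (hnn : ∀ x ∈ Set.Icc 0 r, 0 ≤ h x)
    (hint : IntegrableOn h (Set.Icc 0 r))
    (ρ : ℝ → ℝ)
    (hρ : ∀ x ∈ Set.Icc 0 r,
      βstar x * ρ x * (1 - F x) =
        (∫ t in x..r, h t * deriv βstar t * g (βstar t) / (G (βstar t)) ^ 2)
          - h x / G (βstar x)) :
    (∫ x in (0 : ℝ)..r, x * f x * g (βstar x) * ρ x * βstar x) ≤ 0 := by
  have hFc : ContinuousOn F (Icc 0 r) := fun x hx =>
    (hFderiv x hx).continuousAt.continuousWithinAt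
  have hβ' : ∀ x ∈ Icc 0 r, HasDerivAt βstar (C * f x / (1 - F x) ^ 2) x := fun x hx =>
    funext hβ ▸ (hFderiv x hx).const_div_one_sub C (hF1 x hx).ne
  have hβc : ContinuousOn βstar (Icc 0 r) := fun x hx =>
    (hβ' x hx).continuousAt.continuousWithinAt
  set u' := fun x => g (βstar x) * (C * f x / (1 - F x) ^ 2)
  have hq : MonotoneOn (fun x => x * (1 - F x) / C) (Icc 0 r) := fun x hx y hy hxy =>
    div_le_div_of_nonneg_right (monotoneOn_mul_one_sub_of_virtualValue_nonpos hFderiv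
      (fun x hx => hfpos x (Ioo_subset_Icc_self hx))
      (fun x hx => hψ x (Ioo_subset_Ico_self hx)) hx hy hxy) hC.le
  have hu'c : ContinuousOn u' (Icc 0 r) :=
    (hgcont.comp_continuousOn hβc).mul ((continuousOn_const.mul hfcont).div
      ((continuousOn_const.sub hFc).pow 2) fun x hx =>
        pow_ne_zero 2 (sub_ne_zero.2 (hF1 x hx).ne'))
  have hu' : ∀ x ∈ Icc 0 r, 0 ≤ u' x := fun x hx =>
    mul_nonneg ((hGderiv _).nonneg_of_monotone hGmono)
      (div_nonneg (mul_nonneg hC.le (hfpos x hx).le) (sq_nonneg _))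
  have key := integral_mul_deriv_mul_tail_sub_nonpos (u := fun x => G (βstar x)) hr.le hq
    ((continuousOn_id.mul (continuousOn_const.sub hFc)).div_const C) (by simp)
    (fun x hx => (hGderiv (βstar x)).comp x (hβ' x hx)) hu'c hu' hGpos hint hnn
  refine le_of_eq_of_le (integral_congr fun x hx => ?_) key
  rw [uIcc_of_le hr.le] at hx
  have hA : ∫ t in x..r, h t * (u' t / G (βstar t) ^ 2)
      = ∫ t in x..r, h t * deriv βstar t * g (βstar t) / G (βstar t) ^ 2 :=
    integral_congr fun t ht => by
      rw [uIcc_of_le hx.2] at ht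
      simp only [u', (hβ' t ⟨hx.1.trans ht.1, ht.2⟩).deriv]
      ring
  rw [hA, ← hρ x hx, hβ x]
  field_simp [sub_ne_zero.2 (hF1 x hx).ne', hC.ne']

/-- **Local optimality of thresholding, general competition cdf `G`.** Let
`β*(x) = C/(1−F(x))` be the thresholding strategy with `G(β*(x)) > 0` on `[0,r]` and
`ψ_F ≤ 0` on `[0,r)`. If `h ≥ 0` with `h(r) = 0` and the perturbation direction `ρ`
satisfies `β*(x)ρ(x)(1−F(x)) = ∫ₓ^r h(t)β*'(t)g(β*(t))/G(β*(t))² dt − h(x)/G(β*(x))`,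
then the first-order term `I = ∫₀^r x·f(x)·g(β*(x))·ρ(x)·β*(x) dx` is nonpositive. -/
theorem stmt_9 (r : ℝ) (hr : 0 < r) (F f : ℝ → ℝ)
    (hFderiv : ∀ x ∈ Set.Icc 0 r, HasDerivAt F (f x) x)
    (hfcont : ContinuousOn f (Set.Icc 0 r))
    (hfpos : ∀ x ∈ Set.Icc 0 r, 0 < f x)
    (hF1 : ∀ x ∈ Set.Icc 0 r, F x < 1)
    (C : ℝ) (hC : 0 < C)
    (βstar : ℝ → ℝ) (hβ : ∀ x, βstar x = C / (1 - F x))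
    (G g : ℝ → ℝ) (hGderiv : ∀ y, HasDerivAt G (g y) y) (hgcont : Continuous g)
    (hGmono : Monotone G) (hGnn : ∀ y, 0 ≤ G y) (hGle : ∀ y, G y ≤ 1)
    (hGpos : ∀ x ∈ Set.Icc 0 r, 0 < G (βstar x))
    (hψ : ∀ x ∈ Set.Ico 0 r, x - (1 - F x) / f x ≤ 0)
    (h : ℝ → ℝ) (hnn : ∀ x ∈ Set.Icc 0 r, 0 ≤ h x) (hhr : h r = 0)
    (hint : IntegrableOn h (Set.Icc 0 r))
    (ρ : ℝ → ℝ)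
    (hρ : ∀ x ∈ Set.Icc 0 r,
      βstar x * ρ x * (1 - F x) =
        (∫ t in x..r, h t * deriv βstar t * g (βstar t) / (G (βstar t)) ^ 2)
          - h x / G (βstar x)) :
    (∫ x in (0 : ℝ)..r, x * f x * g (βstar x) * ρ x * βstar x) ≤ 0 :=
  stmt_9_general r hr F f hFderiv hfcont hfpos hF1 C hC βstar hβ G g hGderiv hgcont hGmono hGpos hψ
    h hnn hint ρ hρ
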